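/- arXiv:1704.04608 — 4 statements merged into one kernel-verified Lean document; each statement's English description precedes it below -/
import Mathlib

section
/- Every state vertex of a finite digraph D is reachable from some input vertex if and only if every non-top-linked strongly connected component of D (restricted to state vertices) contains a state vertex receiving an edge from some input vertex. -/
/-!
An accessible state `x` is reached by a path whose first edge leaves an input `u` and enters a
state `w`; as inputs have no incoming edges, the rest of the path stays among the states. If the
SCC of `x` is non-top-linked, no state path can enter it from outside, so `w` lies in that SCC.

Conversely, if the SCC of a state `x` receives an edge from a state `z` outside it, then `z` is
strictly upstream of `x` and has strictly fewer state ancestors; inducting on that number we reach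
a non-top-linked SCC, which receives an input edge by hypothesis, and the path continues to `x`
inside the state graph.
-/

/-- Edge relation of the subgraph induced on state vertices (non-input vertices). -/
def EX {V : Type} (E : V → V → Prop) (isInput : V → Prop) (a b : V) : Prop :=
  ¬ isInput a ∧ ¬ isInput b ∧ E a b

/-- The strongly connected component (within the induced subgraph on state
vertices) of the state vertex `x`. -/
def sccX {V : Type} (E : V → V → Prop) (isInput : V → Prop) (x : V) : Set V :=
  {y | Relation.ReflTransGen (EX E isInput) x y ∧ Relation.ReflTransGen (EX E isInput) y x}

open Relation

def IsNonTopLinked {V : Type} (E : V → V → Prop) (isInput : V → Prop) (x : V) : Prop :=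
  ∀ z : V, ¬ isInput z → z ∉ sccX E isInput x → ∀ y ∈ sccX E isInput x, ¬ E z y

theorem ncard_reflTransGen_lt_of_not_reflTransGen {α : Type*} [Finite α] {r : α → α → Prop}
    {a b : α} (hab : ReflTransGen r a b) (hba : ¬ ReflTransGen r b a) :
    {c | ReflTransGen r c a}.ncard < {c | ReflTransGen r c b}.ncard :=
  Set.ncard_lt_ncard <| (Set.ssubset_iff_of_subset fun _ hc => hc.trans hab).2
    ⟨b, ReflTransGen.refl, hba⟩

section StateGraph

variable {V : Type} {E : V → V → Prop} {isInput : V → Prop}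

theorem reflTransGen_of_reflTransGen_EX {a b : V} (h : ReflTransGen (EX E isInput) a b) :
    ReflTransGen E a b :=
  ReflTransGen.mono (fun _ _ hab => hab.2.2) _ _ h

theorem not_isInput_of_mem_sccX {x y : V} (hx : ¬ isInput x) (hy : y ∈ sccX E isInput x) :
    ¬ isInput y := by
  rcases hy.1.cases_tail with rfl | ⟨_, _, hcy⟩
  · exact hx
  · exact hcy.2.1

theorem reflTransGen_EX_of_reflTransGen (hNoIn : ∀ u v : V, isInput v → ¬ E u v) {a b : V}
    (h : ReflTransGen E a b) (ha : ¬ isInput a) : ReflTransGen (EX E isInput) a b := by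
  induction h using ReflTransGen.head_induction_on with
  | refl => exact ReflTransGen.refl
  | @head a c hac _ ih =>
    have hc : ¬ isInput c := fun hc => hNoIn a c hc hac
    exact ReflTransGen.head ⟨ha, hc, hac⟩ (ih hc)

theorem exists_edge_reflTransGen_EX_of_isInput (hNoIn : ∀ u v : V, isInput v → ¬ E u v)
    {u x : V} (hu : isInput u) (hx : ¬ isInput x) (h : ReflTransGen E u x) :
    ∃ w, E u w ∧ ReflTransGen (EX E isInput) w x := by
  rcases h.cases_head with rfl | ⟨w, huw, hwx⟩
  · exact absurd hu hx
  · exact ⟨w, huw, reflTransGen_EX_of_reflTransGen hNoIn hwx fun hw => hNoIn u w hw huw⟩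

theorem mem_sccX_of_reflTransGen_EX {x w : V} (hclosed : IsNonTopLinked E isInput x)
    (h : ReflTransGen (EX E isInput) w x) : w ∈ sccX E isInput x := by
  induction h using ReflTransGen.head_induction_on with
  | refl => exact ⟨ReflTransGen.refl, ReflTransGen.refl⟩
  | @head a c hac _ ih =>
    by_contra ha
    exact hclosed a hac.1 ha c ih hac.2.2

theorem exists_input_edge_mem_sccX (hNoIn : ∀ u v : V, isInput v → ¬ E u v) {x : V}
    (hx : ¬ isInput x) (hacc : ∃ u : V, isInput u ∧ ReflTransGen E u x)
    (hclosed : IsNonTopLinked E isInput x) :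
    ∃ y ∈ sccX E isInput x, ∃ u : V, isInput u ∧ E u y := by
  obtain ⟨u, hu, hux⟩ := hacc
  obtain ⟨w, huw, hwx⟩ := exists_edge_reflTransGen_EX_of_isInput hNoIn hu hx hux
  exact ⟨w, mem_sccX_of_reflTransGen_EX hclosed hwx, u, hu, huw⟩

theorem exists_isInput_reflTransGen [Finite V]
    (H : ∀ x : V, ¬ isInput x →
      IsNonTopLinked E isInput x →
      ∃ y ∈ sccX E isInput x, ∃ u : V, isInput u ∧ E u y)
    (x : V) (hx : ¬ isInput x) : ∃ u : V, isInput u ∧ ReflTransGen E u x := by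
  by_cases hclosed : IsNonTopLinked E isInput x
  · obtain ⟨y, hy, u, hu, huy⟩ := H x hx hclosed
    exact ⟨u, hu, ReflTransGen.head huy (reflTransGen_of_reflTransGen_EX hy.2)⟩
  · simp only [IsNonTopLinked] at hclosed
    push Not at hclosed
    obtain ⟨z, hz, hzx_not_scc, y, hy, hzy⟩ := hclosed
    have hzx : ReflTransGen (EX E isInput) z x :=
      ReflTransGen.head ⟨hz, not_isInput_of_mem_sccX hx hy, hzy⟩ hy.2
    obtain ⟨u, hu, huz⟩ := exists_isInput_reflTransGen H z hz
    exact ⟨u, hu, huz.trans (reflTransGen_of_reflTransGen_EX hzx)⟩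
termination_by {v | ReflTransGen (EX E isInput) v x}.ncard
decreasing_by
  exact ncard_reflTransGen_lt_of_not_reflTransGen hzx fun hxz => hzx_not_scc ⟨hxz, hzx⟩

end StateGraph

/-- Let `D` be a finite digraph whose vertices are partitioned
into state vertices and input vertices, where input vertices have no incoming
edges. Then every state vertex is reachable from some input vertex if and only
if every non-top-linked SCC of the induced subgraph on state vertices (an SCC
receiving no edge from a state vertex outside it) contains a state vertex that
receives an edge directly from some input vertex. -/
theorem stmt5 {V : Type} [Fintype V] (E : V → V → Prop) (isInput : V → Prop)
    (hNoIn : ∀ u v : V, isInput v → ¬ E u v) :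
    (∀ x : V, ¬ isInput x → ∃ u : V, isInput u ∧ Relation.ReflTransGen E u x) ↔
      (∀ x : V, ¬ isInput x →
        (∀ z : V, ¬ isInput z → z ∉ sccX E isInput x →
          ∀ y ∈ sccX E isInput x, ¬ E z y) →
        ∃ y ∈ sccX E isInput x, ∃ u : V, isInput u ∧ E u y) :=
  ⟨fun hacc x hx => exists_input_edge_mem_sccX hNoIn hx (hacc x hx),
    exists_isInput_reflTransGen⟩
end

section
/- In a flow network with integer edge capacities, a single source s and single sink t, there exists a maximum flow that is integer-valued on every edge. -/
/-!
Take an integer flow `f` of maximum value among the finitely many integer flows, and let `T`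
consist of `s` and the vertices reachable from an unsaturated edge `s → x` by residual edges
avoiding `s`. Pushing one unit along such a residual walk, and from its end on to `t` or back
into `s` along an unsaturated edge, would give a better integer flow. Hence `t ∉ T`, every edge
from `T` into `s` or out of `T` is saturated, and no flow enters `T \ {s}` from outside, so the
value of `f` equals the capacity of `T`, which bounds the value of every real feasible flow.
-/

/-- A feasible flow in a finite flow network with integer capacities `b`,
source `s` and sink `t`: nonnegative, capacity-respecting, and conserving flow
at every vertex other than `s` and `t`. -/
def FeasibleFlow {V : Type} [Fintype V] (b : V → V → ℕ) (s t : V)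
    (f : V → V → ℝ) : Prop :=
  (∀ u v, 0 ≤ f u v) ∧ (∀ u v, f u v ≤ (b u v : ℝ)) ∧
    ∀ v : V, v ≠ s → v ≠ t → ∑ u, f u v = ∑ w, f v w

/-- The value of a flow: total flow out of the source `s`. -/
noncomputable def flowValue {V : Type} [Fintype V] (s : V) (f : V → V → ℝ) : ℝ :=
  ∑ v, f s v

open Finset Relation

theorem Relation.ReflTransGen.exists_head_avoiding {α : Type*} {r : α → α → Prop} {x y : α}
    (h : ReflTransGen r x y) (hxy : x ≠ y) :
    ∃ z, r x z ∧ ReflTransGen (fun a c => r a c ∧ a ≠ x ∧ c ≠ x) z y := by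
  induction h with
  | refl => exact absurd rfl hxy
  | @tail b c _ hbc ih =>
    by_cases hxb : x = b
    · subst hxb
      exact ⟨c, hbc, .refl⟩
    · obtain ⟨z, hxz, hzb⟩ := ih hxb
      exact ⟨z, hxz, hzb.tail ⟨hbc, Ne.symm hxb, Ne.symm hxy⟩⟩

namespace FlowNetwork

variable {V : Type}

section Excess

variable [Fintype V] {M : Type*} [AddCommGroup M]

def excess (g : V → V → M) (v : V) : M := ∑ u, g u v - ∑ w, g v w

lemma excess_add (g h : V → V → M) : excess (g + h) = excess g + excess h := by
  ext v
  simp only [excess, Pi.add_apply, sum_add_distrib]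
  abel

lemma excess_sub (g h : V → V → M) : excess (g - h) = excess g - excess h := by
  ext v
  simp only [excess, Pi.sub_apply, sum_sub_distrib]
  abel

lemma sum_excess_eq [DecidableEq V] (g : V → V → M) (T : Finset V) :
    ∑ v ∈ T, excess g v = ∑ v ∈ T, ∑ u ∈ Tᶜ, g u v - ∑ v ∈ T, ∑ w ∈ Tᶜ, g v w := by
  have hinner : ∑ v ∈ T, ∑ u ∈ T, g u v = ∑ v ∈ T, ∑ w ∈ T, g v w := sum_comm
  simp only [excess, sum_sub_distrib, ← sum_add_sum_compl T, sum_add_distrib, hinner]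
  abel

lemma _root_.FeasibleFlow.excess_eq_zero {b : V → V → ℕ} {s t : V} {g : V → V → ℝ}
    (hg : FeasibleFlow b s t g) {v : V} (hvs : v ≠ s) (hvt : v ≠ t) : excess g v = 0 :=
  sub_eq_zero.2 (hg.2.2 v hvs hvt)

end Excess

section Cut

variable [Fintype V] [DecidableEq V] {b : V → V → ℕ} {s t : V}

def IsCut (s t : V) (T : Finset V) : Prop := s ∈ T ∧ ∀ v ∈ T, v ≠ s → v ≠ t

variable (b s) in
/-- Edges from `T` into `s` count as well: the value is the flow out of `s`, and flow returning
to `s` is not subtracted from it. -/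
def cutCapacity (T : Finset V) : ℝ := ∑ u ∈ T, (b u s : ℝ) + ∑ v ∈ T, ∑ w ∈ Tᶜ, (b v w : ℝ)

lemma flowValue_eq_cut {g : V → V → ℝ} {T : Finset V} (hsT : s ∈ T)
    (hcons : ∀ v ∈ T, v ≠ s → excess g v = 0) :
    flowValue s g = ∑ u ∈ T, g u s + ∑ v ∈ T, ∑ w ∈ Tᶜ, g v w
      - ∑ v ∈ T.erase s, ∑ u ∈ Tᶜ, g u v := by
  have hsum : ∑ v ∈ T, excess g v = excess g s := sum_eq_single_of_mem s hsT hcons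
  have hin : ∑ v ∈ T, ∑ u ∈ Tᶜ, g u v = ∑ u ∈ Tᶜ, g u s + ∑ v ∈ T.erase s, ∑ u ∈ Tᶜ, g u v :=
    (add_sum_erase T _ hsT).symm
  have hsplit : ∑ u, g u s = ∑ u ∈ T, g u s + ∑ u ∈ Tᶜ, g u s := (sum_add_sum_compl T _).symm
  have := sum_excess_eq g T
  rw [hsum, excess] at this
  rw [flowValue]
  linarith

lemma flowValue_le_cutCapacity {g : V → V → ℝ} (hg : FeasibleFlow b s t g) {T : Finset V}
    (hT : IsCut s t T) : flowValue s g ≤ cutCapacity b s T := by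
  rw [flowValue_eq_cut hT.1 fun v hv hvs => hg.excess_eq_zero hvs (hT.2 v hv hvs), cutCapacity]
  have hin : ∑ u ∈ T, g u s ≤ ∑ u ∈ T, (b u s : ℝ) := sum_le_sum fun u _ => hg.2.1 u s
  have hout : ∑ v ∈ T, ∑ w ∈ Tᶜ, g v w ≤ ∑ v ∈ T, ∑ w ∈ Tᶜ, (b v w : ℝ) :=
    sum_le_sum fun v _ => sum_le_sum fun w _ => hg.2.1 v w
  have hback : 0 ≤ ∑ v ∈ T.erase s, ∑ u ∈ Tᶜ, g u v :=
    sum_nonneg fun v _ => sum_nonneg fun u _ => hg.1 u v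
  linarith

lemma flowValue_eq_cutCapacity {g : V → V → ℝ} (hg : FeasibleFlow b s t g) {T : Finset V}
    (hT : IsCut s t T) (hin : ∀ u ∈ T, g u s = b u s) (hout : ∀ v ∈ T, ∀ w ∉ T, g v w = b v w)
    (hback : ∀ v ∈ T, v ≠ s → ∀ u ∉ T, g u v = 0) :
    flowValue s g = cutCapacity b s T := by
  rw [flowValue_eq_cut hT.1 fun v hv hvs => hg.excess_eq_zero hvs (hT.2 v hv hvs), cutCapacity,
    sum_congr rfl hin, sum_congr rfl fun v hv => sum_congr rfl fun w hw => hout v hv w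
      (mem_compl.1 hw),
    sum_eq_zero fun v hv => sum_eq_zero fun u hu => hback v (mem_of_mem_erase hv)
      (ne_of_mem_erase hv) u (mem_compl.1 hu), sub_zero]

end Cut

section Augment

variable [DecidableEq V] (b : V → V → ℕ)

def IsCapped (f : V → V → ℤ) : Prop := ∀ u v, 0 ≤ f u v ∧ f u v ≤ b u v

def Residual (f : V → V → ℤ) (u v : V) : Prop := f u v < b u v ∨ 0 < f v u

def unitEdge (x y : V) : V → V → ℤ := fun u v => if u = x ∧ v = y then 1 else 0

def push (f : V → V → ℤ) (x y : V) : V → V → ℤ :=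
  if f x y < b x y then f + unitEdge x y else f - unitEdge y x

variable {b}

lemma excess_unitEdge [Fintype V] (x y : V) :
    excess (unitEdge x y) = Pi.single y 1 - Pi.single x 1 := by
  ext v
  simp [excess, unitEdge, Pi.single_apply, ite_and]

lemma IsCapped.add_unitEdge {f : V → V → ℤ} (hf : IsCapped b f) {x y : V}
    (h : f x y < b x y) : IsCapped b (f + unitEdge x y) := by
  intro u v
  by_cases huv : u = x ∧ v = y
  · obtain ⟨rfl, rfl⟩ := huv
    have := hf u v
    simp only [Pi.add_apply, unitEdge, and_self, if_true]
    omega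
  · simpa [unitEdge, huv] using hf u v

lemma IsCapped.sub_unitEdge {f : V → V → ℤ} (hf : IsCapped b f) {x y : V}
    (h : 0 < f x y) : IsCapped b (f - unitEdge x y) := by
  intro u v
  by_cases huv : u = x ∧ v = y
  · obtain ⟨rfl, rfl⟩ := huv
    have := hf u v
    simp only [Pi.sub_apply, unitEdge, and_self, if_true]
    omega
  · simpa [unitEdge, huv] using hf u v

lemma IsCapped.push {f : V → V → ℤ} (hf : IsCapped b f) {x y : V} (h : Residual b f x y) :
    IsCapped b (push b f x y) := by
  unfold FlowNetwork.push
  split_ifs with hxy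
  · exact hf.add_unitEdge hxy
  · exact hf.sub_unitEdge (h.resolve_left hxy)

lemma excess_push [Fintype V] (f : V → V → ℤ) (x y : V) :
    excess (push b f x y) = excess f + (Pi.single y 1 - Pi.single x 1) := by
  unfold push
  split_ifs
  · rw [excess_add, excess_unitEdge]
  · rw [excess_sub, excess_unitEdge]
    abel

lemma push_apply_of_ne (f : V → V → ℤ) {x y u v : V} (h₁ : u ≠ x ∨ v ≠ y)
    (h₂ : u ≠ y ∨ v ≠ x) : push b f x y u v = f u v := by
  unfold push
  split_ifs <;> simp [unitEdge] <;> tauto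

/-- The walk need not be simple: after pushing along its first edge, the rest of the walk can be
taken to avoid its start (`exists_head_avoiding`), so induction on `S` applies. -/
theorem exists_augment [Fintype V] {f : V → V → ℤ} (hf : IsCapped b f) (S : Finset V) {x y : V}
    (h : ReflTransGen (fun u v => u ∈ S ∧ v ∈ S ∧ Residual b f u v) x y) :
    ∃ g, IsCapped b g ∧ (∀ u ∉ S, ∀ v, g u v = f u v ∧ g v u = f v u) ∧
      excess g = excess f + (Pi.single y 1 - Pi.single x 1) := by
  induction S using Finset.strongInduction generalizing f x with
  | H S ih =>
  by_cases hxy : x = y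
  · subst hxy
    exact ⟨f, hf, fun _ _ _ => ⟨rfl, rfl⟩, by simp⟩
  obtain ⟨z, ⟨hxS, hzS, hxz⟩, hzy⟩ := h.exists_head_avoiding hxy
  have hzy' : ReflTransGen
      (fun u v => u ∈ S.erase x ∧ v ∈ S.erase x ∧ Residual b (push b f x z) u v) z y := by
    refine ReflTransGen.mono ?_ z y hzy
    rintro u v ⟨⟨hu, hv, huv⟩, hux, hvx⟩
    refine ⟨mem_erase.2 ⟨hux, hu⟩, mem_erase.2 ⟨hvx, hv⟩, ?_⟩
    rwa [Residual, push_apply_of_ne f (.inl hux) (.inr hvx),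
      push_apply_of_ne f (.inl hvx) (.inr hux)]
  obtain ⟨g, hg, hgS, hge⟩ := ih _ (erase_ssubset hxS) (hf.push hxz) hzy'
  refine ⟨g, hg, fun u hu v => ?_, by rw [hge, excess_push]; abel⟩
  have hux : u ≠ x := fun h => hu (h ▸ hxS)
  have huz : u ≠ z := fun h => hu (h ▸ hzS)
  rw [← push_apply_of_ne f (.inl hux) (.inl huz), ← push_apply_of_ne f (.inr huz) (.inr hux)]
  exact hgS u (fun h => hu (mem_of_mem_erase h)) v

end Augment

section MaxFlow

variable [Fintype V] {b : V → V → ℕ} {s t : V}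

variable (b s t) in
def IsIntFlow (f : V → V → ℤ) : Prop := IsCapped b f ∧ ∀ v, v ≠ s → v ≠ t → excess f v = 0

variable (b s t) in
def IsMaxIntFlow (f : V → V → ℤ) : Prop :=
  IsIntFlow b s t f ∧ ∀ g, IsIntFlow b s t g → ∑ v, g s v ≤ ∑ v, f s v

variable (b s t) in
lemma exists_isMaxIntFlow : ∃ f, IsMaxIntFlow b s t f := by
  have hfin : {f | IsIntFlow b s t f}.Finite :=
    (Set.Finite.pi fun u => Set.Finite.pi fun v => Set.finite_Icc (0 : ℤ) (b u v)).subset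
      fun f hf => Set.mem_univ_pi.2 fun u => Set.mem_univ_pi.2 fun v => hf.1 u v
  obtain ⟨f, hf, hmax⟩ := Set.exists_max_image _ (fun f => ∑ v, f s v) hfin
    ⟨0, fun u v => by simp, fun v _ _ => by simp [excess]⟩
  exact ⟨f, hf, hmax⟩

lemma IsIntFlow.feasibleFlow {f : V → V → ℤ} (hf : IsIntFlow b s t f) :
    FeasibleFlow b s t fun u v => (f u v : ℝ) := by
  refine ⟨fun u v => ?_, fun u v => ?_, fun v hvs hvt => ?_⟩ <;> dsimp only
  · exact_mod_cast (hf.1 u v).1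
  · exact_mod_cast (hf.1 u v).2
  · exact_mod_cast sub_eq_zero.1 (hf.2 v hvs hvt)

lemma IsMaxIntFlow.sum_le_of_excess_eq {f g : V → V → ℤ} (hf : IsMaxIntFlow b s t f)
    (hg : IsCapped b g) (hexc : ∀ v, v ≠ s → v ≠ t → excess g v = excess f v) :
    ∑ v, g s v ≤ ∑ v, f s v :=
  hf.2 g ⟨hg, fun v hvs hvt => (hexc v hvs hvt).trans (hf.1.2 v hvs hvt)⟩

variable [DecidableEq V]

lemma sum_add_unitEdge_apply (f : V → V → ℤ) (x y u : V) :
    ∑ v, (f + unitEdge x y) u v = ∑ v, f u v + if u = x then 1 else 0 := by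
  simp [unitEdge, sum_add_distrib, ite_and]

lemma IsMaxIntFlow.apply_self_eq {f : V → V → ℤ} (hf : IsMaxIntFlow b s t f) :
    f s s = b s s := by
  by_contra hne
  have hlt : f s s < b s s := lt_of_le_of_ne (hf.1.1 s s).2 hne
  have := hf.sum_le_of_excess_eq (hf.1.1.add_unitEdge hlt) fun v _ _ => by
    simp [excess_add, excess_unitEdge]
  rw [sum_add_unitEdge_apply, if_pos rfl] at this
  omega

/-- Otherwise the edge `s → x`, the walk, and then `t` or the edge `z → s` would carry one more
unit out of `s`. -/
lemma IsMaxIntFlow.ne_and_apply_eq_of_reflTransGen {f : V → V → ℤ} (hf : IsMaxIntFlow b s t f)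
    {x z : V} (hx : x ≠ s) (hsx : f s x < b s x)
    (hxz : ReflTransGen (fun u v => u ≠ s ∧ v ≠ s ∧ Residual b f u v) x z) :
    z ≠ t ∧ f z s = b z s := by
  obtain ⟨g, hg, hgs, hge⟩ := exists_augment hf.1.1 (univ.erase s) <| by
    refine ReflTransGen.mono ?_ x z hxz
    rintro u v ⟨hu, hv, huv⟩
    exact ⟨mem_erase.2 ⟨hu, mem_univ u⟩, mem_erase.2 ⟨hv, mem_univ v⟩, huv⟩
  have hzs : z ≠ s := by
    rcases hxz.cases_tail with rfl | ⟨_, _, _, hzs, _⟩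
    exacts [hx, hzs]
  have hrow : ∀ v, g s v = f s v := fun v => (hgs s (notMem_erase s univ) v).1
  have hcol : ∀ u, g u s = f u s := fun u => (hgs s (notMem_erase s univ) u).2
  set g₁ := g + unitEdge s x
  have hg₁ : IsCapped b g₁ := hg.add_unitEdge (by rwa [hrow])
  have hval₁ : ∑ v, g₁ s v = ∑ v, f s v + 1 := by
    rw [sum_add_unitEdge_apply, if_pos rfl, sum_congr rfl fun v _ => hrow v]
  have hexc₁ : excess g₁ = excess f + (Pi.single z 1 - Pi.single s 1) := by
    rw [excess_add, hge, excess_unitEdge]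
    abel
  refine ⟨fun hzt => ?_, ?_⟩
  · have := hf.sum_le_of_excess_eq hg₁ fun v hvs hvt => by
      simp [hexc₁, hvs, hzt ▸ hvt]
    omega
  · by_contra hne
    have hlt : g₁ z s < b z s := by
      simpa [g₁, unitEdge, hzs, hcol] using lt_of_le_of_ne (hf.1.1 z s).2 hne
    have hexc₂ : excess (g₁ + unitEdge z s) = excess f := by
      rw [excess_add, hexc₁, excess_unitEdge]
      abel
    have := hf.sum_le_of_excess_eq (hg₁.add_unitEdge hlt) fun v _ _ => congrFun hexc₂ v
    rw [sum_add_unitEdge_apply, if_neg hzs.symm, hval₁] at this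
    omega

lemma IsMaxIntFlow.exists_saturated_cut {f : V → V → ℤ} (hf : IsMaxIntFlow b s t f) :
    ∃ T, IsCut s t T ∧ (∀ u ∈ T, f u s = b u s) ∧ (∀ v ∈ T, ∀ w ∉ T, f v w = b v w) ∧
      ∀ v ∈ T, v ≠ s → ∀ u ∉ T, f u v = 0 := by
  classical
  set R := fun u v => u ≠ s ∧ v ≠ s ∧ Residual b f u v
  set T := univ.filter fun z => z = s ∨ ∃ x, x ≠ s ∧ f s x < b s x ∧ ReflTransGen R x z
  have hmem : ∀ z, z ∈ T ↔ z = s ∨ ∃ x, x ≠ s ∧ f s x < b s x ∧ ReflTransGen R x z := by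
    simp [T]
  have hsT : s ∈ T := (hmem s).2 (.inl rfl)
  have hreach : ∀ v ∈ T, v ≠ s → ∃ x, x ≠ s ∧ f s x < b s x ∧ ReflTransGen R x v :=
    fun v hv hvs => ((hmem v).1 hv).resolve_left hvs
  have hstep : ∀ v ∈ T, v ≠ s → ∀ w, w ≠ s → Residual b f v w → w ∈ T := by
    intro v hv hvs w hws hvw
    obtain ⟨x, hx, hsx, hxv⟩ := hreach v hv hvs
    exact (hmem w).2 (.inr ⟨x, hx, hsx, hxv.tail ⟨hvs, hws, hvw⟩⟩)
  refine ⟨T, ⟨hsT, fun v hv hvs => ?_⟩, fun u hu => ?_, fun v hv w hw => ?_,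
    fun v hv hvs u hu => ?_⟩
  · obtain ⟨x, hx, hsx, hxv⟩ := hreach v hv hvs
    exact (hf.ne_and_apply_eq_of_reflTransGen hx hsx hxv).1
  · by_cases hus : u = s
    · subst hus
      exact hf.apply_self_eq
    · obtain ⟨x, hx, hsx, hxu⟩ := hreach u hu hus
      exact (hf.ne_and_apply_eq_of_reflTransGen hx hsx hxu).2
  · have hws : w ≠ s := fun h => hw (h ▸ hsT)
    refine le_antisymm (hf.1.1 v w).2 (not_lt.1 fun hlt => hw ?_)
    by_cases hvs : v = s
    · subst hvs
      exact (hmem w).2 (.inr ⟨w, hws, hlt, .refl⟩)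
    · exact hstep v hv hvs w hws (.inl hlt)
  · have hus : u ≠ s := fun h => hu (h ▸ hsT)
    exact le_antisymm (not_lt.1 fun hpos => hu (hstep v hv hvs u hus (.inr hpos))) (hf.1.1 u v).1

end MaxFlow

end FlowNetwork

/-- integrality theorem. In a flow network with integer edge
capacities, single source `s` and single sink `t`, there exists a maximum flow
that is integer-valued on every edge. -/
theorem stmt6 {V : Type} [Fintype V] (b : V → V → ℕ) (s t : V) :
    ∃ f : V → V → ℝ, FeasibleFlow b s t f ∧
      (∀ u v : V, ∃ k : ℕ, f u v = (k : ℝ)) ∧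
      ∀ g : V → V → ℝ, FeasibleFlow b s t g → flowValue s g ≤ flowValue s f := by
  classical
  obtain ⟨f, hf⟩ := FlowNetwork.exists_isMaxIntFlow b s t
  obtain ⟨T, hT, hin, hout, hback⟩ := hf.exists_saturated_cut
  have hF := hf.1.feasibleFlow
  refine ⟨_, hF, fun u v => ⟨(f u v).toNat, ?_⟩, fun g hg => ?_⟩
  · exact_mod_cast (Int.toNat_of_nonneg (hf.1.1 u v).1).symm
  · rw [FlowNetwork.flowValue_eq_cutCapacity hF hT (fun u hu => by simp [hin u hu])
      (fun v hv w hw => by simp [hout v hv w hw])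
      (fun v hv hvs u hu => by simp [hback v hv hvs u hu])]
    exact FlowNetwork.flowValue_le_cutCapacity hg hT
end

section
/- Let (Ā,B̄) be a structured system with n states and q non-top-linked SCCs in the state digraph, and let F(Ā,B̄) be the associated flow network of Algorithm 1. Then (Ā,B̄) is structurally controllable (i.e., all states accessible and B(Ā,B̄) has a perfect matching of the x'-vertices) if and only if the maximum s–t flow value in F(Ā,B̄) is at least q + n. -/
open scoped Classical

/-- Vertices of the flow network `F(Ā,B̄)` of Algorithm 1: source `s`, sink `t`,
one vertex `N i` per non-top-linked SCC, right copies `xp k` of states, states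
`x r`, inputs `u j`, and input copies `up j`. -/
inductive FV (n m q : ℕ) : Type
  | s : FV n m q
  | t : FV n m q
  | N : Fin q → FV n m q
  | xp : Fin n → FV n m q
  | x : Fin n → FV n m q
  | u : Fin m → FV n m q
  | up : Fin m → FV n m q
  deriving DecidableEq, Fintype

variable {n m q : ℕ}

/-- Capacities of the flow network `F(Ā,B̄)`: all edges have capacity `1`,
except the edges `(u'_j, t)` which have capacity `n+1`; non-edges have
capacity `0`. `memN i r` says state `x_r` belongs to the non-top-linked SCC
`N_i`. -/
noncomputable def cap (A : Fin n → Fin n → Bool) (B : Fin n → Fin m → Bool)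
    (memN : Fin q → Fin n → Bool) : FV n m q → FV n m q → ℕ
  | FV.s, FV.N _ => 1
  | FV.s, FV.xp _ => 1
  | FV.N i, FV.up j => if ∃ r : Fin n, memN i r = true ∧ B r j = true then 1 else 0
  | FV.xp k, FV.x r => if A k r = true then 1 else 0
  | FV.xp k, FV.u j => if B k j = true then 1 else 0
  | FV.u j, FV.up j' => if j = j' then 1 else 0
  | FV.up _, FV.t => n + 1
  | FV.x _, FV.t => 1
  | _, _ => 0

/-- A feasible flow vector on `F(Ā,B̄)`: nonnegative, capacity-respecting, and
conserving flow at every vertex other than `s` and `t`. -/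
def Feasible (b : FV n m q → FV n m q → ℕ) (f : FV n m q → FV n m q → ℝ) : Prop :=
  (∀ a c, 0 ≤ f a c) ∧ (∀ a c, f a c ≤ (b a c : ℝ)) ∧
    ∀ v : FV n m q, v ≠ FV.s → v ≠ FV.t → ∑ a, f a v = ∑ c, f v c

/-- Value of a flow: total flow out of the source. -/
noncomputable def value (f : FV n m q → FV n m q → ℝ) : ℝ := ∑ v, f FV.s v

/-- Edge relation of the system bipartite graph `B(Ā,B̄)`. -/
def bipE (A : Fin n → Fin n → Bool) (B : Fin n → Fin m → Bool) :
    Fin n ⊕ Fin m → Fin n → Prop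
  | Sum.inl r, k => A k r = true
  | Sum.inr j, k => B k j = true

/-- Structural controllability of `(Ā,B̄)` (characterization used throughout the
paper): every non-top-linked SCC `N_i` receives an edge from some input, and
`B(Ā,B̄)` has a matching saturating the right vertices `x'₁,…,x'ₙ`. -/
def SCchar (A : Fin n → Fin n → Bool) (B : Fin n → Fin m → Bool)
    (memN : Fin q → Fin n → Bool) : Prop :=
  (∀ i : Fin q, ∃ j : Fin m, ∃ r : Fin n, memN i r = true ∧ B r j = true) ∧
    ∃ M : Fin n → Fin n ⊕ Fin m, Function.Injective M ∧ ∀ k : Fin n, bipE A B (M k) k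

/-! A matching `M` of `B(Ā,B̄)` saturating the `x'`-vertices and a choice of input `jj i` for each
`Nᵢ` give an integral flow of value `q + n`: one unit along `s → x'ₖ → M k → t` and one along
`s → Nᵢ → u'_{jj i} → t`; since `q ≤ n`, the capacity `n + 1` of `u'_j → t` carries all of them.
Conversely, a flow of value `q + n` saturates every edge leaving `s`. Conservation at `Nᵢ` then
forces flow, hence an edge, into some `u'_j`; and the flow leaving the `x'ₖ` is a fractional
matching of `B(Ā,B̄)` saturating the `x'`-vertices, so Hall's condition holds and a genuine
matching exists. -/

open Finset

theorem Function.Injective.card_filter_eq_le_one {α β : Type*} [Fintype α] [DecidableEq β]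
    {M : α → β} (hM : Function.Injective M) (b : β) : #{a | M a = b} ≤ 1 :=
  card_le_one.2 fun _ ha _ hc => hM ((mem_filter.1 ha).2.trans (mem_filter.1 hc).2.symm)

/- A fractional matching saturating `α` satisfies Hall's condition: the mass `|S|` leaving `S`
lands in the neighbourhood of `S`, each of whose vertices absorbs at most `1`. -/
theorem exists_injective_of_fractional_matching {α β : Type*} [Fintype α] [Fintype β]
    (r : α → β → Prop) (g : α → β → ℝ) (hg : ∀ a b, 0 ≤ g a b)
    (hsupp : ∀ a b, g a b ≠ 0 → r a b) (hrow : ∀ a, 1 ≤ ∑ b, g a b)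
    (hcol : ∀ b, ∑ a, g a b ≤ 1) : ∃ M : α → β, Function.Injective M ∧ ∀ a, r a (M a) := by
  set nbhd : α → Finset β := fun a => {b | r a b}
  have hall : ∀ S : Finset α, #S ≤ #(S.biUnion nbhd) := by
    intro S
    have hrow' : ∀ a ∈ S, 1 ≤ ∑ b ∈ S.biUnion nbhd, g a b := fun a ha => by
      refine (hrow a).trans_eq (sum_subset (subset_univ _) fun b _ hb => ?_).symm
      by_contra hab
      exact hb (mem_biUnion.2 ⟨a, ha, mem_filter.2 ⟨mem_univ b, hsupp a b hab⟩⟩)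
    have hcol' : ∀ b, ∑ a ∈ S, g a b ≤ 1 := fun b =>
      (sum_le_sum_of_subset_of_nonneg (subset_univ S) fun a _ _ => hg a b).trans (hcol b)
    have : (#S : ℝ) ≤ #(S.biUnion nbhd) := calc
      (#S : ℝ) ≤ ∑ a ∈ S, ∑ b ∈ S.biUnion nbhd, g a b := by
        simpa using sum_le_sum hrow'
      _ = ∑ b ∈ S.biUnion nbhd, ∑ a ∈ S, g a b := sum_comm
      _ ≤ #(S.biUnion nbhd) := by simpa using sum_le_sum fun b _ => hcol' b
    exact_mod_cast this
  obtain ⟨M, hM, hMr⟩ := (all_card_le_biUnion_card_iff_exists_injective nbhd).1 hall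
  exact ⟨M, hM, fun a => (mem_filter.1 (hMr a)).2⟩

namespace FV

def equivSum (n m q : ℕ) : FV n m q ≃ Unit ⊕ Unit ⊕ Fin q ⊕ Fin n ⊕ Fin n ⊕ Fin m ⊕ Fin m where
  toFun
    | s => .inl ()
    | t => .inr (.inl ())
    | N i => .inr (.inr (.inl i))
    | xp k => .inr (.inr (.inr (.inl k)))
    | x r => .inr (.inr (.inr (.inr (.inl r))))
    | u j => .inr (.inr (.inr (.inr (.inr (.inl j)))))
    | up j => .inr (.inr (.inr (.inr (.inr (.inr j)))))
  invFun
    | .inl () => s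
    | .inr (.inl ()) => t
    | .inr (.inr (.inl i)) => N i
    | .inr (.inr (.inr (.inl k))) => xp k
    | .inr (.inr (.inr (.inr (.inl r)))) => x r
    | .inr (.inr (.inr (.inr (.inr (.inl j))))) => u j
    | .inr (.inr (.inr (.inr (.inr (.inr j))))) => up j
  left_inv v := by cases v <;> rfl
  right_inv v := by rcases v with _ | _ | _ | _ | _ | _ | _ <;> rfl

theorem sum_eq {M : Type*} [AddCommMonoid M] (g : FV n m q → M) :
    ∑ v, g v = g s + g t + ∑ i, g (N i) + ∑ k, g (xp k) + ∑ r, g (x r)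
      + ∑ j, g (u j) + ∑ j, g (up j) := by
  rw [← (equivSum n m q).symm.sum_comp]
  simp only [Fintype.sum_sum_type, Fintype.sum_unique, add_assoc]
  rfl

end FV

section FlowOfMatching

variable {A : Fin n → Fin n → Bool} {B : Fin n → Fin m → Bool} {memN : Fin q → Fin n → Bool}
  (M : Fin n → Fin n ⊕ Fin m) (jj : Fin q → Fin m)

noncomputable def flowOfMatching : FV n m q → FV n m q → ℝ
  | .s, .N _ => 1
  | .s, .xp _ => 1
  | .N i, .up j => if jj i = j then 1 else 0
  | .xp k, .x r => if M k = .inl r then 1 else 0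
  | .xp k, .u j => if M k = .inr j then 1 else 0
  | .u j, .up j' => if j = j' then #{k | M k = .inr j} else 0
  | .up j, .t => #{i | jj i = j} + #{k | M k = .inr j}
  | .x r, .t => #{k | M k = .inl r}
  | _, _ => 0

theorem flowOfMatching_nonneg (a c : FV n m q) : 0 ≤ flowOfMatching M jj a c := by
  cases a <;> cases c <;> simp only [flowOfMatching] <;> positivity

variable {M jj}

theorem flowOfMatching_le_cap (hq : q ≤ n) (hM : Function.Injective M)
    (hMe : ∀ k, bipE A B (M k) k) (hjj : ∀ i, ∃ r, memN i r = true ∧ B r (jj i) = true)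
    (a c : FV n m q) : flowOfMatching M jj a c ≤ cap A B memN a c := by
  have hfib (y) : (#{k | M k = y} : ℝ) ≤ 1 := by exact_mod_cast hM.card_filter_eq_le_one y
  cases a <;> cases c <;> simp only [flowOfMatching, cap]
  case N.up i j => split_ifs with h h' <;> first | exact absurd (h ▸ hjj i) h' | norm_num
  case xp.x k r =>
    split_ifs with h h' <;> first | exact (h' (by simpa [h, bipE] using hMe k)).elim | norm_num
  case xp.u k j =>
    split_ifs with h h' <;> first | exact (h' (by simpa [h, bipE] using hMe k)).elim | norm_num
  case u.up j j' => split_ifs <;> simp [hfib]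
  case x.t r => simpa using hfib _
  case up.t j =>
    have hN : (#{i | jj i = j} : ℝ) ≤ n := by exact_mod_cast (card_filter_le _ _).trans (by simpa)
    push_cast
    linarith [hfib (.inr j)]
  all_goals norm_num

theorem flowOfMatching_conserve (v : FV n m q) (hs : v ≠ .s) (ht : v ≠ .t) :
    ∑ a, flowOfMatching M jj a v = ∑ c, flowOfMatching M jj v c := by
  cases v
  case s => exact absurd rfl hs
  case t => exact absurd rfl ht
  case xp k => rcases hMk : M k with _ | _ <;> simp [FV.sum_eq, flowOfMatching, hMk]
  all_goals simp [FV.sum_eq, flowOfMatching, sum_boole]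

theorem value_flowOfMatching : value (flowOfMatching M jj) = q + n := by
  simp [value, FV.sum_eq, flowOfMatching]

end FlowOfMatching

namespace Feasible

variable {A : Fin n → Fin n → Bool} {B : Fin n → Fin m → Bool} {memN : Fin q → Fin n → Bool}
  {f : FV n m q → FV n m q → ℝ}

theorem eq_zero_of_cap_eq_zero {b : FV n m q → FV n m q → ℕ} (hf : Feasible b f)
    {a c : FV n m q} (h : b a c = 0) : f a c = 0 :=
  le_antisymm (by simpa [h] using hf.2.1 a c) (hf.1 a c)

theorem le_one_of_cap_eq_one {b : FV n m q → FV n m q → ℕ} (hf : Feasible b f)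
    {a c : FV n m q} (h : b a c = 1) : f a c ≤ 1 := by
  simpa [h] using hf.2.1 a c

-- `simp` cannot discharge `cap A B memN a c = 0` on a non-edge by itself; after unfolding `cap`
-- it is `rfl`.
theorem value_eq (hf : Feasible (cap A B memN) f) :
    value f = ∑ i, f .s (.N i) + ∑ k, f .s (.xp k) := by
  simp (disch := (unfold cap; rfl)) [value, FV.sum_eq, hf.eq_zero_of_cap_eq_zero]

theorem conserve_N (hf : Feasible (cap A B memN) f) (i : Fin q) :
    f .s (.N i) = ∑ j, f (.N i) (.up j) := by
  simpa (disch := (unfold cap; rfl)) only [FV.sum_eq, hf.eq_zero_of_cap_eq_zero,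
    sum_const_zero, add_zero, zero_add] using hf.2.2 (.N i) (by simp) (by simp)

theorem conserve_xp (hf : Feasible (cap A B memN) f) (k : Fin n) :
    f .s (.xp k) = ∑ r, f (.xp k) (.x r) + ∑ j, f (.xp k) (.u j) := by
  simpa (disch := (unfold cap; rfl)) only [FV.sum_eq, hf.eq_zero_of_cap_eq_zero,
    sum_const_zero, add_zero, zero_add] using hf.2.2 (.xp k) (by simp) (by simp)

theorem conserve_x (hf : Feasible (cap A B memN) f) (r : Fin n) :
    ∑ k, f (.xp k) (.x r) = f (.x r) .t := by
  simpa (disch := (unfold cap; rfl)) only [FV.sum_eq, hf.eq_zero_of_cap_eq_zero,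
    sum_const_zero, add_zero, zero_add] using hf.2.2 (.x r) (by simp) (by simp)

theorem conserve_u (hf : Feasible (cap A B memN) f) (j : Fin m) :
    ∑ k, f (.xp k) (.u j) = f (.u j) (.up j) := by
  have h := hf.2.2 (.u j) (by simp) (by simp)
  simp (disch := (unfold cap; rfl)) only [FV.sum_eq, hf.eq_zero_of_cap_eq_zero,
    sum_const_zero, add_zero, zero_add] at h
  rwa [Fintype.sum_eq_single j fun j' hj' =>
    hf.eq_zero_of_cap_eq_zero (by simp [cap, Ne.symm hj'])] at h

theorem source_saturated (hf : Feasible (cap A B memN) f) (hv : (q : ℝ) + n ≤ value f) :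
    (∀ i, f .s (.N i) = 1) ∧ ∀ k, f .s (.xp k) = 1 := by
  set g : Fin q ⊕ Fin n → ℝ := Sum.elim (f .s ∘ .N) (f .s ∘ .xp)
  have hle : ∀ z ∈ univ, g z ≤ 1 := by
    rintro (i | k) - <;> exact hf.le_one_of_cap_eq_one rfl
  have hsum : ∑ z, g z = ∑ _z : Fin q ⊕ Fin n, 1 :=
    le_antisymm (sum_le_sum hle) (by simpa [g, Fintype.sum_sum_type, hf.value_eq] using hv)
  have hsat := (sum_eq_sum_iff_of_le hle).1 hsum
  exact ⟨fun i => hsat (.inl i) (mem_univ _), fun k => hsat (.inr k) (mem_univ _)⟩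

theorem exists_input_of_saturated (hf : Feasible (cap A B memN) f) {i : Fin q}
    (hi : f .s (.N i) = 1) : ∃ j r, memN i r = true ∧ B r j = true := by
  obtain ⟨j, -, hj⟩ := exists_lt_of_sum_lt (s := univ) (f := 0)
    (g := fun j => f (.N i) (.up j)) (by simp [← hf.conserve_N, hi])
  exact ⟨j, by_contra fun hno => hj.ne' (hf.eq_zero_of_cap_eq_zero (if_neg hno))⟩

theorem exists_matching_of_saturated (hf : Feasible (cap A B memN) f)
    (hsat : ∀ k, f .s (.xp k) = 1) :
    ∃ M : Fin n → Fin n ⊕ Fin m, Function.Injective M ∧ ∀ k, bipE A B (M k) k := by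
  refine exists_injective_of_fractional_matching (fun k y => bipE A B y k)
    (fun k => Sum.elim (fun r => f (.xp k) (.x r)) (fun j => f (.xp k) (.u j)))
    (fun k y => by cases y <;> exact hf.1 _ _) (fun k y hy => ?_)
    (fun k => by simp [Fintype.sum_sum_type, ← hf.conserve_xp, hsat]) (fun y => ?_)
  · cases y <;> exact by_contra fun hno => hy (hf.eq_zero_of_cap_eq_zero (if_neg hno))
  · cases y with
    | inl r => simpa [hf.conserve_x] using hf.le_one_of_cap_eq_one (a := .x r) (c := .t) rfl
    | inr j =>
      simpa [hf.conserve_u] using hf.le_one_of_cap_eq_one (a := .u j) (c := .up j) (by simp [cap])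

end Feasible

/-- Theorem 1. Let `(Ā,B̄)` be a structured system with `n`
states and `q` non-top-linked SCCs (given by `memN`) in the state digraph.
Then `(Ā,B̄)` is structurally controllable (all non-top-linked SCCs receive an
input edge and `B(Ā,B̄)` has a perfect matching of the `x'`-vertices) if and
only if the maximum `s`–`t` flow value in `F(Ā,B̄)` is at least `q + n`, i.e.
there is a feasible flow of value at least `q + n`. -/
theorem stmt10 (A : Fin n → Fin n → Bool) (B : Fin n → Fin m → Bool)
    (memN : Fin q → Fin n → Bool) (hq : q ≤ n) :
    SCchar A B memN ↔
      ∃ f : FV n m q → FV n m q → ℝ,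
        Feasible (cap A B memN) f ∧ ((q : ℝ) + n) ≤ value f := by
  constructor
  · rintro ⟨hinput, M, hM, hMe⟩
    choose jj hjj using hinput
    refine ⟨flowOfMatching M jj, ⟨flowOfMatching_nonneg M jj,
      flowOfMatching_le_cap hq hM hMe hjj, flowOfMatching_conserve⟩,
      value_flowOfMatching.ge⟩
  · rintro ⟨f, hf, hv⟩
    obtain ⟨hN, hxp⟩ := hf.source_saturated hv
    exact ⟨fun i => hf.exists_input_of_saturated (hN i), hf.exists_matching_of_saturated hxp⟩
end

section
/- Let f be a feasible flow of value at least q+n in F(Ā,B̄) and define W_f = { j : f((u'_j,t)) > 0 }. Then the restricted system (Ā, B̄_{W_f}) is structurally controllable; equivalently, the flow network F(Ā, B̄_{W_f}) obtained by deleting inputs outside W_f still admits a flow of value q+n. -/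
open scoped Classical

variable {n m q : ℕ}

/-! The only edge leaving `u'_j` is `(u'_j, t)` and the only edge leaving `u_j` is `(u_j, u'_j)`.
So if `f((u'_j, t)) = 0`, conservation forces zero flow into `u'_j` and `u_j`; the edges whose
capacity drops when input `j` is deleted therefore carry no flow, and `f` itself is feasible in
`F(Ā, B̄_{W_f})`. -/

section Flow

variable {b : FV n m q → FV n m q → ℕ} {f : FV n m q → FV n m q → ℝ}

theorem Feasible.eq_zero_of_cap_eq_zero_s11 (hf : Feasible b f) {a c : FV n m q}
    (h : b a c = 0) : f a c = 0 :=
  le_antisymm (by simpa [h] using hf.2.1 a c) (hf.1 a c)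

theorem Feasible.inflow_eq_zero_of_outflow_eq_zero (hf : Feasible b f) {v : FV n m q}
    (hs : v ≠ FV.s) (ht : v ≠ FV.t) (hout : ∀ c, f v c = 0) (a : FV n m q) : f a v = 0 := by
  have hin : ∑ a, f a v = 0 := by simp [hf.2.2 v hs ht, hout]
  exact (Finset.sum_eq_zero_iff_of_nonneg fun a _ => hf.1 a v).mp hin a (Finset.mem_univ a)

end Flow

section Network

variable {A : Fin n → Fin n → Bool} {B : Fin n → Fin m → Bool} {memN : Fin q → Fin n → Bool}
  {f : FV n m q → FV n m q → ℝ}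

theorem cap_up_eq_zero {j : Fin m} {c : FV n m q} (hc : c ≠ FV.t) :
    cap A B memN (FV.up j) c = 0 := by
  cases c <;> simp_all [cap]

theorem cap_u_eq_zero {j : Fin m} {c : FV n m q} (hc : c ≠ FV.up j) :
    cap A B memN (FV.u j) c = 0 := by
  cases c <;> simp_all [cap, eq_comm]

theorem cap_restrict_eq_or (W : Fin m → Bool) (a c : FV n m q) :
    cap A (fun r j => B r j && W j) memN a c = cap A B memN a c ∨
      ∃ j, W j = false ∧ (c = FV.up j ∨ c = FV.u j) := by
  cases a <;> cases c <;> try exact Or.inl rfl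
  all_goals
    rename_i j
    cases hW : W j
    · exact Or.inr ⟨j, hW, by simp⟩
    · simp [cap, hW]

theorem Feasible.inflow_up_eq_zero (hf : Feasible (cap A B memN) f) {j : Fin m}
    (hj : f (FV.up j) FV.t = 0) (a : FV n m q) : f a (FV.up j) = 0 := by
  refine hf.inflow_eq_zero_of_outflow_eq_zero (by simp) (by simp) (fun c => ?_) a
  by_cases hc : c = FV.t
  · rwa [hc]
  · exact hf.eq_zero_of_cap_eq_zero_s11 (cap_up_eq_zero hc)

theorem Feasible.inflow_u_eq_zero (hf : Feasible (cap A B memN) f) {j : Fin m}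
    (hj : f (FV.up j) FV.t = 0) (a : FV n m q) : f a (FV.u j) = 0 := by
  refine hf.inflow_eq_zero_of_outflow_eq_zero (by simp) (by simp) (fun c => ?_) a
  by_cases hc : c = FV.up j
  · rw [hc]; exact hf.inflow_up_eq_zero hj _
  · exact hf.eq_zero_of_cap_eq_zero_s11 (cap_u_eq_zero hc)

end Network

/-- Corollary 1. Let `f` be a feasible flow of value at least
`q+n` in `F(Ā,B̄)` and let `W_f = {j : f((u'_j,t)) > 0}`. Then the flow network
`F(Ā, B̄_{W_f})` of the system restricted to the inputs in `W_f` (obtained by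
deleting all input columns outside `W_f`) still admits a feasible flow of value
at least `q+n`; equivalently, `(Ā, B̄_{W_f})` is structurally controllable. -/
theorem stmt11 (A : Fin n → Fin n → Bool) (B : Fin n → Fin m → Bool)
    (memN : Fin q → Fin n → Bool)
    (f : FV n m q → FV n m q → ℝ) (hf : Feasible (cap A B memN) f)
    (hval : ((q : ℝ) + n) ≤ value f) :
    ∃ g : FV n m q → FV n m q → ℝ,
      Feasible (cap A (fun r j => B r j && decide (0 < f (FV.up j) FV.t)) memN) g ∧
        ((q : ℝ) + n) ≤ value g := by
  refine ⟨f, ⟨hf.1, fun a c => ?_, hf.2.2⟩, hval⟩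
  rcases cap_restrict_eq_or (fun j => decide (0 < f (FV.up j) FV.t)) a c with hcap | ⟨j, hWj, hc⟩
  · rw [hcap]; exact hf.2.1 a c
  · have hj : f (FV.up j) FV.t = 0 := le_antisymm (by simpa using hWj) (hf.1 _ _)
    rcases hc with rfl | rfl
    · rw [hf.inflow_up_eq_zero hj a]; positivity
    · rw [hf.inflow_u_eq_zero hj a]; positivity
end
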